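/- Lemma A.2 (linear algebra on the cylinder): Let 1 ≤ k ≤ n−1 and N = (n−k+1)(n−k)/2. Regard so(n−k+1) as the subspace of so(n+1) of antisymmetric matrices of block form diag(0_{k×k}, J̄) with J̄ ∈ so(n−k+1), and equip so(n+1) with the Frobenius inner product ⟨A,B⟩ = tr(AᵀB). Let {J_α}_{α=1}^{N} be an orthonormal basis of this subspace, let b ∈ ℝ^{n+1} be orthogonal to ∩_α ker(J_α), and let A ∈ so(n+1) be Frobenius-orthogonal to so(k) ⊕ so(n−k+1) (the block-diagonal antisymmetric matrices). Let Γ = {(y,ω) : y ∈ ℝ^k, ω ∈ S^{n−k}} ⊂ ℝ^{n+1} be the cylinder of unit radius with outward unit normal ν(y,ω) = (0,ω). If there is a nonempty open subset U of Γ such that ⟨[A, J_α]x + J_α b, ν(x)⟩ = 0 for every x ∈ U and every α (where [A,J] = AJ − JA is the commutator), then A = 0 and b = 0. -/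

import Mathlib

/-!
Because `A` has only off-diagonal blocks and `J_α` lives in the lower diagonal block, `A J_α`
vanishes on the lower rows and `J_α A` on the lower columns. Writing `x = (y, ω)` on the
cylinder, the tangency condition therefore reads `⟨J_α b - J_α A (y, 0), ω⟩ = 0`, with a vector
independent of `ω`. Varying `ω` in an open piece of the sphere gives `J_α b = J_α A x`, and varying
`y` freely then gives `J_α A = 0`, hence `J_α b = 0` and `b = 0`. Counting dimensions, the `J_α`
span `so(n-k+1)`, so `M A = 0` for all `M ∈ so(n-k+1)`; since `n - k + 1 ≥ 2` this kills the
lower rows of `A`, and antisymmetry together with the block condition does the rest.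
-/

open Matrix Filter Topology

theorem eq_zero_of_eventually_smul_eq_zero {E : Type*} [AddCommGroup E] [Module ℝ E]
    [NoZeroSMulDivisors ℝ E] {v : E} (h : ∀ᶠ t : ℝ in 𝓝 0, t • v = 0) : v = 0 := by
  obtain ⟨t, ht, ht0⟩ :=
    ((h.filter_mono nhdsWithin_le_nhds).and (self_mem_nhdsWithin (s := {0}ᶜ))).exists
  exact (smul_eq_zero.mp ht).resolve_left ht0

namespace Matrix

section skewSingle

variable {ι R : Type*} [DecidableEq ι] [CommRing R]

def skewSingle (i j : ι) : Matrix ι ι R := single i j 1 - single j i 1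

theorem transpose_skewSingle (i j : ι) : (skewSingle i j : Matrix ι ι R)ᵀ = -skewSingle i j := by
  simp [skewSingle, transpose_single]

theorem skewSingle_apply_eq_zero {i j a b : ι} (hij : ¬(i = a ∧ j = b)) (hji : ¬(j = a ∧ i = b)) :
    (skewSingle i j : Matrix ι ι R) a b = 0 := by
  simp [skewSingle, single_apply_of_ne _ _ _ _ _ hij, single_apply_of_ne _ _ _ _ _ hji]

theorem skewSingle_mul_apply_same [Fintype ι] {i j : ι} (h : i ≠ j) (A : Matrix ι ι R) (b : ι) :
    (skewSingle i j * A : Matrix ι ι R) i b = A j b := by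
  simp [skewSingle, sub_mul, h]

theorem trace_transpose_mul_skewSingle [Fintype ι] (A : Matrix ι ι R) (i j : ι) :
    trace (Aᵀ * skewSingle i j) = A i j - A j i := by
  simp [skewSingle, mul_sub, trace_mul_single]

end skewSingle

theorem apply_swap_of_transpose_eq_neg {ι R : Type*} [Neg R] {M : Matrix ι ι R} (hM : Mᵀ = -M)
    (i j : ι) : M j i = -M i j :=
  congrFun (congrFun hM i) j

theorem apply_eq_zero_of_trace_transpose_mul_skewSingle {ι : Type*} [Fintype ι] [DecidableEq ι]
    {A : Matrix ι ι ℝ} (hA : Aᵀ = -A) {i j : ι} (h : trace (Aᵀ * skewSingle i j) = 0) :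
    A i j = 0 := by
  rw [trace_transpose_mul_skewSingle, apply_swap_of_transpose_eq_neg hA i j] at h
  linarith

theorem linearIndependent_of_trace_transpose_mul {ι κ K : Type*} [Fintype ι] [Fintype κ]
    [DecidableEq κ] [Field K] {J : κ → Matrix ι ι K}
    (hJ : ∀ α β, trace ((J α)ᵀ * J β) = if α = β then 1 else 0) : LinearIndependent K J := by
  refine Fintype.linearIndependent_iff.mpr fun g hg β => ?_
  simpa [Matrix.mul_sum, trace_sum, hJ] using congrArg (fun M => trace ((J β)ᵀ * M)) hg

section TailSkew

variable {ι : Type*} (p : ι → Prop)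

/-- `so(T)` for `T = {i | p i}`, embedded in the `ι × ι` matrices by zero-padding: this is the
paper's `so(n-k+1) ⊂ so(n+1)`. -/
def tailSkew : Submodule ℝ (Matrix ι ι ℝ) where
  carrier := {M | Mᵀ = -M ∧ ∀ i j, ¬ p i ∨ ¬ p j → M i j = 0}
  add_mem' := by
    rintro M M' ⟨hM, hM0⟩ ⟨hM', hM'0⟩
    refine ⟨by rw [transpose_add, hM, hM', neg_add], fun i j hij => ?_⟩
    simp [hM0 i j hij, hM'0 i j hij]
  zero_mem' := ⟨by simp, fun _ _ _ => rfl⟩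
  smul_mem' := by
    rintro c M ⟨hM, hM0⟩
    refine ⟨by rw [transpose_smul, hM, smul_neg], fun i j hij => ?_⟩
    simp [hM0 i j hij]

variable {p}

theorem skewSingle_mem_tailSkew [DecidableEq ι] {i j : ι} (hi : p i) (hj : p j) :
    skewSingle i j ∈ tailSkew p := by
  refine ⟨transpose_skewSingle i j, fun a b hab => skewSingle_apply_eq_zero ?_ ?_⟩ <;>
  · rintro ⟨rfl, rfl⟩
    tauto

theorem finrank_tailSkew_le [Fintype ι] [LinearOrder ι] [DecidablePred p] :
    Module.finrank ℝ (tailSkew p) ≤ (Fintype.card {i // p i}).choose 2 := by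
  let P := {x : {i // p i} × {i // p i} // x.1 < x.2}
  let φ : tailSkew p →ₗ[ℝ] P → ℝ :=
    { toFun := fun M x => (M : Matrix ι ι ℝ) x.1.1 x.1.2
      map_add' := fun _ _ => rfl
      map_smul' := fun _ _ => rfl }
  have hφ : Function.Injective φ := by
    refine (injective_iff_map_eq_zero φ).mpr fun ⟨M, hanti, hM0⟩ hφM => ?_
    have hupper : ∀ i j : {i // p i}, i < j → M i j = 0 := fun i j h => congrFun hφM ⟨(i, j), h⟩
    ext i j
    show M i j = 0
    by_cases hij : p i ∧ p j
    · rcases lt_trichotomy (⟨i, hij.1⟩ : {i // p i}) ⟨j, hij.2⟩ with h | h | h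
      · exact hupper _ _ h
      · cases congrArg Subtype.val h
        linarith [apply_swap_of_transpose_eq_neg hanti i i]
      · simpa [apply_swap_of_transpose_eq_neg hanti j i] using hupper _ _ h
    · exact hM0 i j (not_and_or.mp hij)
  calc Module.finrank ℝ (tailSkew p) ≤ Module.finrank ℝ (P → ℝ) :=
        LinearMap.finrank_le_finrank_of_injective hφ
    _ = (Fintype.card {i // p i}).choose 2 := by
        rw [Module.finrank_fintype_fun_eq_card, Fintype.card_subtype,
          Fintype.card_product_filter_lt]

theorem span_eq_tailSkew [Fintype ι] [LinearOrder ι] [DecidablePred p] {κ : Type*} [Fintype κ]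
    [DecidableEq κ] {J : κ → Matrix ι ι ℝ} (hJ : ∀ α, J α ∈ tailSkew p)
    (hJortho : ∀ α β, trace ((J α)ᵀ * J β) = if α = β then 1 else 0)
    (hcard : (Fintype.card {i // p i}).choose 2 ≤ Fintype.card κ) :
    Submodule.span ℝ (Set.range J) = tailSkew p := by
  refine Submodule.eq_of_le_of_finrank_le (Submodule.span_le.mpr (Set.range_subset_iff.mpr hJ)) ?_
  rw [finrank_span_eq_card (linearIndependent_of_trace_transpose_mul hJortho)]
  exact finrank_tailSkew_le.trans hcard

theorem eq_zero_of_forall_tailSkew_mul_eq_zero [Fintype ι] [DecidableEq ι] [DecidablePred p]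
    {A : Matrix ι ι ℝ} (hA : Aᵀ = -A)
    (hAdiag : ∀ i j, (p i ↔ p j) → A i j = 0) (hcard : 1 < Fintype.card {i // p i})
    (hMA : ∀ M ∈ tailSkew p, M * A = 0) : A = 0 := by
  have hrow : ∀ i, p i → ∀ j, A i j = 0 := by
    intro i hi j
    obtain ⟨⟨l, hl⟩, hli⟩ := Fintype.exists_ne_of_one_lt_card hcard ⟨i, hi⟩
    have hli : l ≠ i := fun h => hli (Subtype.ext h)
    rw [← skewSingle_mul_apply_same hli A j, hMA _ (skewSingle_mem_tailSkew hl hi), zero_apply]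
  ext i j
  by_cases hi : p i
  · exact hrow i hi j
  by_cases hj : p j
  · rw [zero_apply, ← neg_eq_zero, ← apply_swap_of_transpose_eq_neg hA, hrow j hj i]
  · exact hAdiag i j (iff_of_false hi hj)

end TailSkew

section BlockProducts

variable {ι : Type*} [Fintype ι] {p : ι → Prop} {A J : Matrix ι ι ℝ}

theorem mul_apply_eq_zero_of_tail_row (hA : ∀ i j, p i → p j → A i j = 0)
    (hJ : ∀ i j, ¬ p i ∨ ¬ p j → J i j = 0) {i : ι} (hi : p i) (j : ι) : (A * J) i j = 0 := by
  rw [mul_apply]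
  refine Finset.sum_eq_zero fun l _ => ?_
  by_cases hl : p l
  · rw [hA i l hi hl, zero_mul]
  · rw [hJ l j (Or.inl hl), mul_zero]

theorem mul_apply_eq_zero_of_tail_col (hA : ∀ i j, p i → p j → A i j = 0)
    (hJ : ∀ i j, ¬ p i ∨ ¬ p j → J i j = 0) (i : ι) {j : ι} (hj : p j) : (J * A) i j = 0 := by
  rw [mul_apply]
  refine Finset.sum_eq_zero fun l _ => ?_
  by_cases hl : p l
  · rw [hA l j hl hj, mul_zero]
  · rw [hJ i l (Or.inr hl), zero_mul]

end BlockProducts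

end Matrix

section Cylinder

variable {ι : Type*} [Fintype ι] (p : ι → Prop) [DecidablePred p]

def cylinder : Set (ι → ℝ) := {x | ∑ i with p i, x i ^ 2 = 1}

noncomputable def cylinderRetract (x : ι → ℝ) : ι → ℝ :=
  fun i => if p i then x i / √(∑ j with p j, x j ^ 2) else x i

theorem continuous_sum_filter_sq : Continuous fun x : ι → ℝ => ∑ i with p i, x i ^ 2 :=
  continuous_finsetSum _ fun i _ => (continuous_apply i).pow 2

variable {p}

theorem mem_cylinder_iff {x : ι → ℝ} :
    x ∈ cylinder p ↔ ∑ i, (if p i then x i ^ 2 else 0) = 1 := by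
  rw [← Finset.sum_filter]
  rfl

theorem cylinderRetract_mem_cylinder {x : ι → ℝ} (hx : 0 < ∑ i with p i, x i ^ 2) :
    cylinderRetract p x ∈ cylinder p := by
  show ∑ i with p i, cylinderRetract p x i ^ 2 = 1
  rw [Finset.sum_congr rfl fun i hi => by rw [cylinderRetract, if_pos (Finset.mem_filter.mp hi).2],
    Finset.sum_congr rfl fun i _ => div_pow _ _ _, ← Finset.sum_div, Real.sq_sqrt hx.le]
  exact div_self hx.ne'

theorem cylinderRetract_of_mem {x : ι → ℝ} (hx : x ∈ cylinder p) : cylinderRetract p x = x := by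
  have hx' : ∑ i with p i, x i ^ 2 = 1 := hx
  ext i
  by_cases hi : p i <;> simp [cylinderRetract, hi, hx']

theorem continuousAt_cylinderRetract {x : ι → ℝ} (hx : x ∈ cylinder p) :
    ContinuousAt (cylinderRetract p) x := by
  have hx' : ∑ i with p i, x i ^ 2 = 1 := hx
  refine continuousAt_pi.mpr fun i => ?_
  by_cases hi : p i
  · simp only [cylinderRetract, hi, if_true]
    exact (continuous_apply i).continuousAt.div (continuous_sum_filter_sq p).sqrt.continuousAt
      (by simp [hx'])
  · simp only [cylinderRetract, hi, if_false]
    exact (continuous_apply i).continuousAt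

theorem dotProduct_cylinderRetract {v : ι → ℝ} (hv : ∀ i, ¬ p i → v i = 0) (x : ι → ℝ) :
    v ⬝ᵥ cylinderRetract p x = v ⬝ᵥ x / √(∑ j with p j, x j ^ 2) := by
  rw [dotProduct, dotProduct, Finset.sum_div]
  refine Finset.sum_congr rfl fun i _ => ?_
  by_cases hi : p i
  · simp only [cylinderRetract, hi, if_true, mul_div_assoc]
  · simp [hv i hi]

theorem mulVec_eq_zero_of_mulVec_eq_on_cylinder {κ : Type*} {U : Set (ι → ℝ)} (hU : IsOpen U)
    {x : ι → ℝ} (hx : x ∈ U ∩ cylinder p) {M : Matrix κ ι ℝ}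
    (hM : ∀ y ∈ U ∩ cylinder p, M *ᵥ y = M *ᵥ x) {d : ι → ℝ} (hd : ∀ i, p i → d i = 0) :
    M *ᵥ d = 0 := by
  have hU' : ∀ᶠ t : ℝ in 𝓝 0, x + t • d ∈ U :=
    (by fun_prop : Continuous fun t : ℝ => x + t • d).continuousAt.preimage_mem_nhds
      (by simpa using hU.mem_nhds hx.1)
  have hcyl (t : ℝ) : x + t • d ∈ cylinder p := by
    have : ∑ i with p i, (x + t • d) i ^ 2 = ∑ i with p i, x i ^ 2 :=
      Finset.sum_congr rfl fun i hi => by simp [hd i (Finset.mem_filter.mp hi).2]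
    exact this.trans hx.2
  refine eq_zero_of_eventually_smul_eq_zero (hU'.mono fun t ht => ?_)
  simpa [mulVec_add, mulVec_smul] using hM _ ⟨ht, hcyl t⟩

theorem eq_zero_of_dotProduct_eq_zero_on_cylinder {U : Set (ι → ℝ)} (hU : IsOpen U)
    {x : ι → ℝ} (hx : x ∈ U ∩ cylinder p) {v : ι → ℝ} (hv0 : ∀ i, ¬ p i → v i = 0)
    (hv : ∀ y ∈ U ∩ cylinder p, (∀ i, ¬ p i → y i = x i) → v ⬝ᵥ y = 0) : v = 0 := by
  have hx' : ∑ i with p i, x i ^ 2 = 1 := hx.2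
  have hcurve : Continuous fun t : ℝ => x + t • v := by fun_prop
  have hpos : ∀ᶠ t : ℝ in 𝓝 0, 0 < ∑ i with p i, (x + t • v) i ^ 2 :=
    continuousAt_const.eventually_lt ((continuous_sum_filter_sq p).comp hcurve).continuousAt
      (by simp [hx'])
  have hU' : ∀ᶠ t : ℝ in 𝓝 0, cylinderRetract p (x + t • v) ∈ U := by
    refine ((continuousAt_cylinderRetract hx.2).comp_of_eq hcurve.continuousAt
      (by simp)).preimage_mem_nhds ?_
    simpa [cylinderRetract_of_mem hx.2] using hU.mem_nhds hx.1
  have hline : ∀ᶠ t : ℝ in 𝓝 0, v ⬝ᵥ x + t * (v ⬝ᵥ v) = 0 := by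
    filter_upwards [hpos, hU'] with t ht htU
    have := hv _ ⟨htU, cylinderRetract_mem_cylinder ht⟩ fun i hi => by
      simp [cylinderRetract, hi, hv0 i hi]
    rw [dotProduct_cylinderRetract hv0, div_eq_zero_iff, Real.sqrt_eq_zero ht.le,
      or_iff_left ht.ne'] at this
    simpa [dotProduct_add, dotProduct_smul] using this
  have hvx : v ⬝ᵥ x = 0 := by simpa using hline.self_of_nhds
  exact dotProduct_self_eq_zero.mp <| eq_zero_of_eventually_smul_eq_zero <|
    hline.mono fun t ht => by simpa [hvx] using ht

end Cylinder

section Tangency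

variable {ι : Type*} [Fintype ι] {p : ι → Prop} [DecidablePred p] {A J : Matrix ι ι ℝ}
  {U : Set (ι → ℝ)} {b : ι → ℝ}

theorem mulVec_eq_of_tangent_on_cylinder (hA : ∀ i j, p i → p j → A i j = 0)
    (hJ : ∀ i j, ¬ p i ∨ ¬ p j → J i j = 0) (hU : IsOpen U)
    (htangent : ∀ y ∈ U ∩ cylinder p,
      ∑ i with p i, ((A * J - J * A) *ᵥ y + J *ᵥ b) i * y i = 0)
    {x : ι → ℝ} (hx : x ∈ U ∩ cylinder p) : J *ᵥ b = (J * A) *ᵥ x := by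
  have hJAy : ∀ y : ι → ℝ, (∀ i, ¬ p i → y i = x i) → (J * A) *ᵥ y = (J * A) *ᵥ x := by
    intro y hy
    ext i
    refine Finset.sum_congr rfl fun l _ => ?_
    by_cases hl : p l
    · simp [mul_apply_eq_zero_of_tail_col hA hJ i hl]
    · rw [hy l hl]
  have hhead : ∀ i, ¬ p i → (J *ᵥ b - (J * A) *ᵥ x) i = 0 := fun i hi => by
    simp [mulVec, dotProduct, mul_apply, hJ i _ (Or.inl hi)]
  refine sub_eq_zero.mp <| eq_zero_of_dotProduct_eq_zero_on_cylinder hU hx hhead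
    fun y hy hyx => ?_
  rw [← htangent y hy, Finset.sum_filter, dotProduct]
  refine Finset.sum_congr rfl fun i _ => ?_
  by_cases hi : p i
  · have hAJ : ((A * J) *ᵥ y) i = 0 := by
      simp [mulVec, dotProduct, mul_apply_eq_zero_of_tail_row hA hJ hi]
    simp only [hi, if_true, sub_mulVec, hJAy y hyx, Pi.add_apply, Pi.sub_apply, hAJ]
    ring
  · simp [hi, hhead i hi]

theorem mul_eq_zero_of_tangent_on_cylinder (hA : ∀ i j, p i → p j → A i j = 0)
    (hJ : ∀ i j, ¬ p i ∨ ¬ p j → J i j = 0) (hU : IsOpen U)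
    (htangent : ∀ y ∈ U ∩ cylinder p,
      ∑ i with p i, ((A * J - J * A) *ᵥ y + J *ᵥ b) i * y i = 0)
    (hne : (U ∩ cylinder p).Nonempty) : J * A = 0 ∧ J *ᵥ b = 0 := by
  classical
  obtain ⟨x, hx⟩ := hne
  have hJb := fun y (hy : y ∈ U ∩ cylinder p) =>
    mulVec_eq_of_tangent_on_cylinder hA hJ hU htangent hy
  have hJA : J * A = 0 := by
    ext i j
    by_cases hj : p j
    · exact mul_apply_eq_zero_of_tail_col hA hJ i hj
    · have := mulVec_eq_zero_of_mulVec_eq_on_cylinder hU hx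
        (fun y hy => (hJb y hy).symm.trans (hJb x hx)) (d := Pi.single j 1)
        fun l hl => Pi.single_eq_of_ne (by rintro rfl; exact hj hl) _
      simpa [mulVec_single_one] using congrFun this i
  exact ⟨hJA, by rw [hJb x hx, hJA, zero_mulVec]⟩

end Tangency

theorem Fin.card_subtype_le_val (n k : ℕ) : Fintype.card {i : Fin n // k ≤ (i : ℕ)} = n - k := by
  have h := Finset.card_filter_add_card_filter_not (s := Finset.univ) (fun i : Fin n => (i : ℕ) < k)
  simp only [Fin.card_filter_val_lt, Finset.card_univ, Fintype.card_fin, not_lt] at h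
  rw [Fintype.card_subtype]
  omega

theorem linear_algebra_on_cylinder_general
    (n k : ℕ) (hkn : k < n)
    (N : ℕ) (hN : 2 * N = (n - k + 1) * (n - k))
    (J : Fin N → Matrix (Fin (n + 1)) (Fin (n + 1)) ℝ)
    (hJanti : ∀ α, (J α)ᵀ = -(J α))
    (hJblock : ∀ α, ∀ i j : Fin (n + 1), ((i : ℕ) < k ∨ (j : ℕ) < k) → J α i j = 0)
    (hJortho : ∀ α β, Matrix.trace ((J α)ᵀ * J β) = if α = β then (1 : ℝ) else 0)
    (b : Fin (n + 1) → ℝ)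
    (hb : ∀ v : Fin (n + 1) → ℝ, (∀ α, (J α).mulVec v = 0) →
      (∑ i : Fin (n + 1), b i * v i) = 0)
    (A : Matrix (Fin (n + 1)) (Fin (n + 1)) ℝ) (hA : Aᵀ = -A)
    (hAperp : ∀ B : Matrix (Fin (n + 1)) (Fin (n + 1)) ℝ, Bᵀ = -B →
      (∀ i j : Fin (n + 1),
        (((i : ℕ) < k ∧ k ≤ (j : ℕ)) ∨ (k ≤ (i : ℕ) ∧ (j : ℕ) < k)) → B i j = 0) →
      Matrix.trace (Aᵀ * B) = 0)
    (U : Set (Fin (n + 1) → ℝ)) (hUopen : IsOpen U)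
    (hne : (U ∩ {x | (∑ i : Fin (n + 1), if k ≤ (i : ℕ) then x i ^ 2 else 0) = 1}).Nonempty)
    (htangent : ∀ α, ∀ x ∈ U,
      (∑ i : Fin (n + 1), if k ≤ (i : ℕ) then x i ^ 2 else 0) = 1 →
      (∑ i : Fin (n + 1), if k ≤ (i : ℕ)
        then ((A * J α - J α * A).mulVec x + (J α).mulVec b) i * x i else 0) = 0) :
    A = 0 ∧ b = 0 := by
  let p : Fin (n + 1) → Prop := fun i => k ≤ (i : ℕ)
  have hcard : Fintype.card {i // p i} = n + 1 - k := Fin.card_subtype_le_val (n + 1) k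
  have hJ : ∀ α, J α ∈ tailSkew p := fun α =>
    ⟨hJanti α, fun i j hij => hJblock α i j (by simpa [p, not_le] using hij)⟩
  have hAdiag : ∀ i j, (p i ↔ p j) → A i j = 0 := fun i j hij =>
    apply_eq_zero_of_trace_transpose_mul_skewSingle hA <| hAperp _ (transpose_skewSingle i j)
      fun a b hab => skewSingle_apply_eq_zero (by rintro ⟨rfl, rfl⟩; simp only [p] at hij; omega)
        (by rintro ⟨rfl, rfl⟩; simp only [p] at hij; omega)
  have hJA : ∀ α, J α * A = 0 ∧ J α *ᵥ b = 0 := fun α =>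
    mul_eq_zero_of_tangent_on_cylinder (fun i j hi hj => hAdiag i j (iff_of_true hi hj))
      (hJ α).2 hUopen
      (fun y hy => by rw [Finset.sum_filter]; exact htangent α y hy.1 (mem_cylinder_iff.mp hy.2))
      (hne.mono fun x hx => ⟨hx.1, mem_cylinder_iff.mpr hx.2⟩)
  have hspan := span_eq_tailSkew hJ hJortho (by
    rw [hcard, Fintype.card_fin, Nat.choose_two_right, show n + 1 - k - 1 = n - k by omega,
      show n + 1 - k = n - k + 1 by omega, ← hN]
    omega)
  refine ⟨eq_zero_of_forall_tailSkew_mul_eq_zero hA hAdiag (by omega) fun M hM => ?_,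
    dotProduct_self_eq_zero.mp (hb b fun α => (hJA α).2)⟩
  rw [← hspan] at hM
  exact (Submodule.span_le (p := LinearMap.ker (LinearMap.mulRight ℝ A))).mpr
    (Set.range_subset_iff.mpr fun α => (hJA α).1) hM

/-- **Lemma A.2 (linear algebra on the cylinder)**. Let `{J_α}` be an orthonormal basis
(w.r.t. the Frobenius inner product `⟨A,B⟩ = tr(AᵀB)`) of the embedded
`so(n-k+1) ⊂ so(n+1)` (antisymmetric matrices of block form `diag(0_{k×k}, J̄)`), let
`b ∈ ℝ^{n+1}` be orthogonal to `∩_α ker J_α`, and let `A ∈ so(n+1)` be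
Frobenius-orthogonal to `so(k) ⊕ so(n-k+1)` (the block-diagonal antisymmetric matrices).
If `⟨[A, J_α]x + J_α b, ν(x)⟩ = 0` for all `α` and all `x` in a nonempty open subset of the
unit-radius cylinder `Γ = {x : Σ_{i ≥ k} xᵢ² = 1}` (outward normal `ν(x)ᵢ = xᵢ` for
`i ≥ k`, `0` else), then `A = 0` and `b = 0`. -/
theorem linear_algebra_on_cylinder
    (n k : ℕ) (hk : 1 ≤ k) (hkn : k < n)
    (N : ℕ) (hN : 2 * N = (n - k + 1) * (n - k))
    (J : Fin N → Matrix (Fin (n + 1)) (Fin (n + 1)) ℝ)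
    (hJanti : ∀ α, (J α)ᵀ = -(J α))
    (hJblock : ∀ α, ∀ i j : Fin (n + 1), ((i : ℕ) < k ∨ (j : ℕ) < k) → J α i j = 0)
    (hJortho : ∀ α β, Matrix.trace ((J α)ᵀ * J β) = if α = β then (1 : ℝ) else 0)
    (b : Fin (n + 1) → ℝ)
    (hb : ∀ v : Fin (n + 1) → ℝ, (∀ α, (J α).mulVec v = 0) →
      (∑ i : Fin (n + 1), b i * v i) = 0)
    (A : Matrix (Fin (n + 1)) (Fin (n + 1)) ℝ) (hA : Aᵀ = -A)
    (hAperp : ∀ B : Matrix (Fin (n + 1)) (Fin (n + 1)) ℝ, Bᵀ = -B →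
      (∀ i j : Fin (n + 1),
        (((i : ℕ) < k ∧ k ≤ (j : ℕ)) ∨ (k ≤ (i : ℕ) ∧ (j : ℕ) < k)) → B i j = 0) →
      Matrix.trace (Aᵀ * B) = 0)
    (U : Set (Fin (n + 1) → ℝ)) (hUopen : IsOpen U)
    (hne : (U ∩ {x | (∑ i : Fin (n + 1), if k ≤ (i : ℕ) then x i ^ 2 else 0) = 1}).Nonempty)
    (htangent : ∀ α, ∀ x ∈ U,
      (∑ i : Fin (n + 1), if k ≤ (i : ℕ) then x i ^ 2 else 0) = 1 →
      (∑ i : Fin (n + 1), if k ≤ (i : ℕ)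
        then ((A * J α - J α * A).mulVec x + (J α).mulVec b) i * x i else 0) = 0) :
    A = 0 ∧ b = 0 :=
  linear_algebra_on_cylinder_general n k hkn N hN J hJanti hJblock hJortho b hb A hA hAperp U hUopen
    hne htangent
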